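/- Quaternion initial value lemma: the real vector space of all functions ψ : ℤ → (S → ℝ) satisfying the discrete Laplace equation ψ(n+2) − 2ψ(n) + ψ(n−2) = |H|²·ψ(n) for all integers n (where |H|² acts on S → ℝ by matrix-vector multiplication) is a subspace of dimension exactly 4·(v + e); equivalently, a solution is uniquely determined by a quaternion-valued initial field, i.e. by four functions S → ℝ. -/

import Mathlib

open Matrix

variable {V : Type*} [Fintype V] [DecidableEq V]

/-- The simplices of the 1-dimensional simplicial complex of a graph: vertices and edges. -/
abbrev Simplex (G : SimpleGraph V) [DecidableRel G.Adj] := V ⊕ G.edgeSet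

variable (G : SimpleGraph V) [DecidableRel G.Adj]

/-- The vertex set of a simplex. -/
def sVerts : Simplex G → Set V
  | Sum.inl u => {u}
  | Sum.inr f => {w | w ∈ (f : Sym2 V)}

instance (x : Simplex G) (w : V) : Decidable (w ∈ sVerts G x) :=
  match x with
  | Sum.inl u => decidable_of_iff (w = u) (by simp [sVerts])
  | Sum.inr f => decidable_of_iff (w ∈ (f : Sym2 V)) (by simp [sVerts])

/-- Two simplices touch if their vertex sets intersect. -/
def touches (x y : Simplex G) : Prop := ∃ w, w ∈ sVerts G x ∧ w ∈ sVerts G y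

instance : DecidableRel (touches G) := fun _ _ => Fintype.decidableExistsFintype

/-- The connection Laplacian. -/
def connL : Matrix (Simplex G) (Simplex G) ℤ :=
  Matrix.of fun x y => if touches G x y then 1 else 0

/-- The sign-less incidence matrix. -/
def absd : Matrix (Simplex G) (Simplex G) ℤ :=
  Matrix.of fun a b =>
    match a, b with
    | Sum.inr f, Sum.inl u => if u ∈ (f : Sym2 V) then 1 else 0
    | _, _ => 0

/-- The sign-less Hodge Laplacian. -/
def absH : Matrix (Simplex G) (Simplex G) ℤ := (absd G + (absd G)ᵀ) ^ 2

/-- The sign-less Hodge Laplacian as a real matrix. -/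
def absHR : Matrix (Simplex G) (Simplex G) ℝ := (absH G).map (Int.cast : ℤ → ℝ)

/-! Let `L` be any linear endomorphism of a module `M` (here `|H|²` on `M = ℝ^S`). Shifting a
window `(ψ n, ψ (n+1), ψ (n+2), ψ (n+3))` of a solution by one step is the companion map
`x ↦ (x₁, x₂, x₃, (L + 2) x₂ - x₀)`, which is invertible because the recurrence can equally be
solved for `ψ (n-2)`. Solutions are therefore exactly the orbits of this automorphism of `M⁴`, so
`ψ ↦ (ψ 0, ψ 1, ψ 2, ψ 3)` is a linear isomorphism onto `M⁴`, of dimension `4 |S| = 4 (v + e)`. -/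

theorem Equiv.Perm.eq_zpow_apply_of_forall_add_one {α : Type*} {σ : Equiv.Perm α} {w : ℤ → α}
    (hw : ∀ n, w (n + 1) = σ (w n)) (n : ℤ) : w n = (σ ^ n) (w 0) := by
  induction n using Int.induction_on with
  | zero => rfl
  | succ n ih => rw [hw, ih, add_comm, _root_.zpow_one_add, Equiv.Perm.mul_apply]
  | pred n ih =>
    apply σ.injective
    rw [← hw, sub_add_cancel, ih, ← Equiv.Perm.mul_apply, ← _root_.zpow_one_add, add_sub_cancel]

namespace DiscreteLaplace

variable {R M : Type*} [CommRing R] [AddCommGroup M] [Module R M] (L : Module.End R M)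

def solutions : Submodule R (ℤ → M) where
  carrier := {ψ | ∀ n, ψ (n + 2) - (2 : R) • ψ n + ψ (n - 2) = L (ψ n)}
  add_mem' {ψ φ} hψ hφ n := by
    simp only [Pi.add_apply, map_add, ← hψ n, ← hφ n]
    module
  zero_mem' n := by simp
  smul_mem' c ψ hψ n := by
    simp only [Pi.smul_apply, map_smul, ← hψ n]
    module

def companion : Equiv.Perm (M × M × M × M) where
  toFun x := (x.2.1, x.2.2.1, x.2.2.2, L x.2.2.1 + (2 : R) • x.2.2.1 - x.1)
  invFun x := (L x.2.1 + (2 : R) • x.2.1 - x.2.2.2, x.1, x.2.1, x.2.2.1)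
  left_inv x := by simp
  right_inv x := by simp

def window (ψ : ℤ → M) (n : ℤ) : M × M × M × M := (ψ n, ψ (n + 1), ψ (n + 2), ψ (n + 3))

theorem mem_solutions_iff_window_add_one {ψ : ℤ → M} :
    ψ ∈ solutions L ↔ ∀ n, window ψ (n + 1) = companion L (window ψ n) := by
  have step (n : ℤ) : window ψ (n + 1) = companion L (window ψ n) ↔
      ψ (n + 4) = L (ψ (n + 2)) + (2 : R) • ψ (n + 2) - ψ n := by
    simp only [window, companion, Equiv.coe_fn_mk, Prod.mk.injEq]
    rw [show n + 1 + 1 = n + 2 by ring, show n + 1 + 2 = n + 3 by ring,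
      show n + 1 + 3 = n + 4 by ring]
    simp
  simp only [step]
  refine (Equiv.subRight (2 : ℤ)).forall_congr fun {n} => ?_
  rw [Equiv.subRight_apply, sub_add_cancel, show n - 2 + 4 = n + 2 by ring]
  constructor <;> intro h <;> linear_combination (norm := module) h

theorem window_zpow_companion_apply (x : M × M × M × M) (n : ℤ) :
    window (fun k => ((companion L ^ k) x).1) n = (companion L ^ n) x := by
  have shift (k : ℕ) : ((companion L ^ (n + k)) x).1 =
      ((companion L ^ k) ((companion L ^ n) x)).1 := by
    rw [add_comm, _root_.zpow_add, zpow_natCast, Equiv.Perm.mul_apply]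
  simp only [window]
  rw [← Nat.cast_one, shift, ← Nat.cast_two, shift, ← Nat.cast_ofNat (n := 3), shift]
  generalize (companion L ^ n) x = y
  simp [pow_succ, companion]

def solutionsEquivWindow : solutions L ≃ₗ[R] M × M × M × M where
  toFun ψ := window ψ.1 0
  map_add' _ _ := rfl
  map_smul' _ _ := rfl
  invFun x := ⟨fun n => ((companion L ^ n) x).1, (mem_solutions_iff_window_add_one L).2 fun n => by
    rw [window_zpow_companion_apply, window_zpow_companion_apply, add_comm, _root_.zpow_one_add,
      Equiv.Perm.mul_apply]⟩
  left_inv ψ := Subtype.ext <| funext fun n => congrArg Prod.fst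
    (Equiv.Perm.eq_zpow_apply_of_forall_add_one ((mem_solutions_iff_window_add_one L).1 ψ.2) n).symm
  right_inv x := by
    simpa using window_zpow_companion_apply L x 0

theorem finrank_solutions [StrongRankCondition R] [Module.Free R M] [Module.Finite R M] :
    Module.finrank R (solutions L) = 4 * Module.finrank R M := by
  rw [(solutionsEquivWindow L).finrank_eq, Module.finrank_prod, Module.finrank_prod,
    Module.finrank_prod]
  ring

end DiscreteLaplace

theorem quaternion_initial_value :
    ∃ W : Submodule ℝ (ℤ → Simplex G → ℝ),
      (∀ ψ : ℤ → Simplex G → ℝ,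
        ψ ∈ W ↔
          ∀ n : ℤ, ψ (n + 2) - (2 : ℝ) • ψ n + ψ (n - 2) = (absHR G ^ 2).mulVec (ψ n)) ∧
      Module.finrank ℝ W = 4 * (Fintype.card V + Fintype.card G.edgeSet) := by
  refine ⟨DiscreteLaplace.solutions (absHR G ^ 2).mulVecLin, fun ψ => Iff.rfl, ?_⟩
  rw [DiscreteLaplace.finrank_solutions, Module.finrank_fintype_fun_eq_card, Fintype.card_sum]
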